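/- Let R = k[x₁,…,xₙ] graded, I = (g₁,…,g_ν) homogeneous with deg g_i = d_i, and let B = (⊕_{i=1}^ν R(d_i)) / R·(g₁,…,g_ν)ᵀ be the cokernel of the column map Γ: R → ⊕ R(d_i). Then for any e ≥ 0, Tor_1^R(R/I^{[p^e]}, B) ≅ (I^{[p^e]} : I)/I^{[p^e]} and Tor_j^R(R/I^{[p^e]}, B) = 0 for all j ≥ 2. -/

import Mathlib

open MvPolynomial CategoryTheory

set_option maxHeartbeats 1000000

open CategoryTheory Limits
open scoped TensorProduct

set_option linter.unusedVariables false

namespace TorAux14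

noncomputable section
variable {R : Type} [CommRing R] {ν : ℕ} (g : Fin ν → R)

abbrev Γlin : R →ₗ[R] (Fin ν → R) := LinearMap.toSpanSingleton R (Fin ν → R) g

def resX (R : Type) [CommRing R] (ν : ℕ) : ℕ → ModuleCat R
  | 0 => ModuleCat.of R (Fin ν → R)
  | 1 => ModuleCat.of R R
  | _ + 2 => ModuleCat.of R PUnit

def resD : ∀ m : ℕ, resX R ν (m + 1) ⟶ resX R ν m
  | 0 => ModuleCat.ofHom (Γlin g)
  | _ + 1 => 0

def resC : ChainComplex (ModuleCat R) ℕ :=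
  ChainComplex.of (resX R ν) (resD g) (fun n => by
    have h : resD g (n + 1) = 0 := rfl
    rw [h, zero_comp])

instance resC_projective (m : ℕ) : CategoryTheory.Projective ((resC g).X m) := by
  match m with
  | 0 => exact ModuleCat.projective_of_free (Pi.basisFun R (Fin ν))
  | 1 => exact ModuleCat.projective_of_free (Module.Basis.singleton PUnit.{1} R)
  | n + 2 =>
    exact show CategoryTheory.Projective (ModuleCat.of R PUnit) from
      ModuleCat.projective_of_free (Module.Basis.empty _ (ι := Empty))

lemma resC_d10 : (resC g).d 1 0 = ModuleCat.ofHom (Γlin g) := ChainComplex.of_d (resX R ν) (resD g) 0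

def resπ : resC g ⟶ (ChainComplex.single₀ (ModuleCat R)).obj
    (ModuleCat.of R ((Fin ν → R) ⧸ Submodule.span R {g})) :=
  (ChainComplex.toSingle₀Equiv _ _).symm
    ⟨ModuleCat.ofHom (Submodule.span R {g}).mkQ, by
      rw [resC_d10]
      refine ModuleCat.hom_ext (LinearMap.ext fun (r : R) => ?_)
      show (Submodule.span R {g}).mkQ (r • g) = 0
      exact (Submodule.Quotient.mk_eq_zero _).2
        (Submodule.smul_mem _ r (Submodule.mem_span_singleton_self g))⟩

lemma resπ_f0 : (resπ g).f 0 = ModuleCat.ofHom (Submodule.span R {g}).mkQ :=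
  ChainComplex.toSingle₀Equiv_symm_apply_f_zero _ _

lemma resC_exactAt_succ (hinj : Function.Injective (Γlin g)) (m : ℕ) :
    (resC g).ExactAt (m + 1) := by
  rw [HomologicalComplex.exactAt_iff' _ (m + 2) (m + 1) m (by simp) (by simp)]
  match m with
  | 0 =>
    rw [ShortComplex.moduleCat_exact_iff]
    intro x hx
    refine ⟨0, ?_⟩
    have hx' : Γlin g x = 0 := by
      have h2 : ((resC g).d 1 0).hom x = 0 := hx
      rwa [resC_d10] at h2
    have : x = 0 := hinj (hx'.trans (map_zero _).symm)
    simp [this]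
  | n + 1 =>
    exact ShortComplex.exact_of_isZero_X₂ _
      (ModuleCat.isZero_of_subsingleton (ModuleCat.of R PUnit))

lemma quasiIso_resπ (hinj : Function.Injective (Γlin g)) : QuasiIso (resπ g) := ⟨fun i => by
  match i with
  | 0 =>
    rw [ChainComplex.quasiIsoAt₀_iff, ShortComplex.quasiIso_iff_of_zeros']
    · constructor
      · rw [ShortComplex.moduleCat_exact_iff]
        intro (x : Fin ν → R) hx
        have hx' : (Submodule.span R {g}).mkQ x = 0 := by
          have h2 : ((resπ g).f 0).hom x = 0 := hx
          rwa [resπ_f0] at h2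
        obtain ⟨r, hr⟩ := Submodule.mem_span_singleton.1
          ((Submodule.Quotient.mk_eq_zero _).1 hx')
        refine ⟨r, ?_⟩
        show ((resC g).d 1 0).hom r = x
        rw [resC_d10]
        exact hr
      · show Epi ((resπ g).f 0)
        rw [resπ_f0]
        exact (ModuleCat.epi_iff_surjective _).2 (Submodule.mkQ_surjective _)
    · rfl
    · rfl
    · rfl
  | n + 1 =>
    rw [quasiIsoAt_iff_exactAt']
    · exact resC_exactAt_succ g hinj n
    · exact ChainComplex.exactAt_succ_single_obj _ _⟩

def resProj (hinj : Function.Injective (Γlin g)) :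
    CategoryTheory.ProjectiveResolution
      (ModuleCat.of R ((Fin ν → R) ⧸ Submodule.span R {g})) where
  complex := resC g
  π := resπ g
  quasiIso := quasiIso_resπ g hinj

section TorPart

open MonoidalCategory

variable (J : Ideal R)

abbrev torF : ModuleCat R ⥤ ModuleCat R :=
  (tensoringLeft (ModuleCat R)).obj (ModuleCat.of R (R ⧸ J))

abbrev torTC : ChainComplex (ModuleCat R) ℕ :=
  ((torF J).mapHomologicalComplex _).obj (resC g)

lemma isZero_torTC_homology (j : ℕ) (hj : 2 ≤ j) :
    Limits.IsZero ((torTC g J).homology j) := by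
  rw [← HomologicalComplex.exactAt_iff_isZero_homology]
  obtain ⟨m, rfl⟩ : ∃ m, j = m + 2 := ⟨j - 2, by omega⟩
  rw [HomologicalComplex.exactAt_iff' _ (m + 3) (m + 2) (m + 1) (by simp) (by simp)]
  refine ShortComplex.exact_of_isZero_X₂ _ ?_
  exact ModuleCat.isZero_of_subsingleton
    (ModuleCat.of R ((R ⧸ J) ⊗[R] (PUnit : Type)))

abbrev torSC : ShortComplex (ModuleCat R) := (torTC g J).sc' 2 1 0

lemma torSC_g_eq : (torSC g J).g =
    ModuleCat.ofHom (LinearMap.lTensor (R ⧸ J) (Γlin g)) := by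
  show (torF J).map ((resC g).d 1 0) = _
  rw [resC_d10]
  rfl

def phiMap : (R ⧸ J) →ₗ[R] (Fin ν → R ⧸ J) :=
  LinearMap.pi fun i => g i • (LinearMap.id : (R ⧸ J) →ₗ[R] R ⧸ J)

lemma phi_eq : (TensorProduct.piScalarRight R R (R ⧸ J) (Fin ν)).toLinearMap ∘ₗ
    (LinearMap.lTensor (R ⧸ J) (Γlin g)) ∘ₗ
      (TensorProduct.rid R (R ⧸ J)).symm.toLinearMap = phiMap g J := by
  refine LinearMap.ext fun x => ?_
  funext i
  simp [phiMap, TensorProduct.rid_symm_apply]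

def eqv2 : (LinearMap.ker (torSC g J).g.hom ⧸ LinearMap.range (torSC g J).moduleCatToCycles)
    ≃ₗ[R] LinearMap.ker (torSC g J).g.hom :=
  Submodule.quotEquivOfEqBot _ (by
    rw [LinearMap.range_eq_bot]
    refine LinearMap.ext fun x => ?_
    haveI : Subsingleton ((torSC g J).X₁ : Type) :=
      show Subsingleton ((R ⧸ J) ⊗[R] (PUnit : Type)) from inferInstance
    rw [Subsingleton.elim x 0, map_zero, map_zero])

lemma ker_map_eq : (LinearMap.ker (torSC g J).g.hom).map
    ((TensorProduct.rid R (R ⧸ J) : ((R ⧸ J) ⊗[R] R) ≃ₗ[R] (R ⧸ J)) : ((R ⧸ J) ⊗[R] R) →ₗ[R] (R ⧸ J)) = LinearMap.ker (phiMap g J) := by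
  rw [← phi_eq g J, torSC_g_eq]
  erw [ModuleCat.hom_ofHom]
  rw [LinearEquiv.ker_comp, LinearMap.ker_comp]
  erw [Submodule.map_equiv_eq_comap_symm]
  rfl


def eqv3 : LinearMap.ker (torSC g J).g.hom ≃ₗ[R] LinearMap.ker (phiMap g J) :=
  ((TensorProduct.rid R (R ⧸ J)).submoduleMap (LinearMap.ker (torSC g J).g.hom)).trans
    (LinearEquiv.ofEq _ _ (ker_map_eq g J))

lemma ker_phi_eq (I : Ideal R) (hI : I = Ideal.span (Set.range g)) :
    LinearMap.ker (phiMap g J) = Submodule.map J.mkQ (Submodule.colon J I) := by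
  ext x
  simp only [LinearMap.mem_ker, Submodule.mem_map]
  constructor
  · intro hx
    obtain ⟨r, rfl⟩ := J.mkQ_surjective x
    refine ⟨r, ?_, rfl⟩
    have hgr : ∀ i, g i * r ∈ J := fun i => by
      have h1 : g i • (J.mkQ r) = 0 := congr_fun hx i
      rw [← map_smul] at h1
      rwa [Submodule.mkQ_apply, Submodule.Quotient.mk_eq_zero, smul_eq_mul] at h1
    rw [Submodule.mem_colon]
    intro p hp
    rw [hI] at hp
    induction hp using Submodule.span_induction with
    | mem y hy =>
        obtain ⟨i, rfl⟩ := hy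
        rw [smul_eq_mul, mul_comm]
        exact hgr i
    | zero => simpa using J.zero_mem
    | add a b _ _ ha hb => rw [smul_add]; exact J.add_mem ha hb
    | smul c a _ ha => rw [smul_comm]; exact Submodule.smul_mem J c ha
  · rintro ⟨r, hr, rfl⟩
    funext i
    have hmem : g i • r ∈ J := by
      rw [smul_eq_mul, mul_comm, ← smul_eq_mul]
      exact Submodule.mem_colon.mp hr (g i) (hI ▸ Submodule.subset_span ⟨i, rfl⟩)
    show g i • J.mkQ r = 0
    rw [← map_smul, Submodule.mkQ_apply, Submodule.Quotient.mk_eq_zero]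
    exact hmem

theorem torComputation (hinj : Function.Injective (Γlin g)) (I : Ideal R)
    (hI : I = Ideal.span (Set.range g)) :
    Nonempty ((((Tor (ModuleCat R) 1).obj (ModuleCat.of R (R ⧸ J))).obj
      (ModuleCat.of R ((Fin ν → R) ⧸ Submodule.span R {g}))) ≃ₗ[R]
      (Submodule.map J.mkQ (Submodule.colon J I))) ∧
    ∀ j : ℕ, 2 ≤ j → Limits.IsZero (((Tor (ModuleCat R) j).obj (ModuleCat.of R (R ⧸ J))).obj
      (ModuleCat.of R ((Fin ν → R) ⧸ Submodule.span R {g}))) := by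
  constructor
  · have e0 : (((Tor (ModuleCat R) 1).obj (ModuleCat.of R (R ⧸ J))).obj
        (ModuleCat.of R ((Fin ν → R) ⧸ Submodule.span R {g}))) ≅ (torTC g J).homology 1 :=
      (resProj g hinj).isoLeftDerivedObj (torF J) 1
    have e1 : (torTC g J).homology 1 ≅ (torSC g J).homology :=
      (torTC g J).homologyIsoSc' 2 1 0 (by simp) (by simp)
    have e2 : (torSC g J).homology ≅ (torSC g J).moduleCatLeftHomologyData.H :=
      (torSC g J).moduleCatHomologyIso
    exact ⟨(((e0 ≪≫ e1 ≪≫ e2).toLinearEquiv).trans (eqv2 g J)).trans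
      ((eqv3 g J).trans (LinearEquiv.ofEq _ _ (ker_phi_eq g J I hI)))⟩
  · intro j hj
    exact (isZero_torTC_homology g J j hj).of_iso
      ((resProj g hinj).isoLeftDerivedObj (torF J) j)

end TorPart

end

end TorAux14

/-- With `R = k[x₁,…,xₙ]`, `I = (g₁,…,g_ν)` generated by homogeneous elements (so `I ≠ 0`
makes `Γ = (g₁,…,g_ν)ᵀ : R → R^ν` injective), and `B = R^ν / R·Γ`:
`Tor_1^R(R/I^{[p^e]}, B) ≅ (I^{[p^e]} : I)/I^{[p^e]}` and
`Tor_j^R(R/I^{[p^e]}, B) = 0` for `j ≥ 2`. -/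
theorem stmt_14 (k : Type) [Field k] (n p : ℕ) (hp : p.Prime) [CharP k p]
    (ν : ℕ) (g : Fin ν → MvPolynomial (Fin n) k) (d : Fin ν → ℕ)
    (hg : ∀ i, g i ∈ homogeneousSubmodule (Fin n) k (d i))
    (I : Ideal (MvPolynomial (Fin n) k)) (hI : I = Ideal.span (Set.range g)) (hI0 : I ≠ ⊥)
    (e : ℕ) (Iq : Ideal (MvPolynomial (Fin n) k))
    (hIq : Iq = Ideal.span ((fun f => f ^ p ^ e) '' I)) :
    Nonempty
      ((((Tor (ModuleCat (MvPolynomial (Fin n) k)) 1).obj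
            (ModuleCat.of (MvPolynomial (Fin n) k) (MvPolynomial (Fin n) k ⧸ Iq))).obj
          (ModuleCat.of (MvPolynomial (Fin n) k)
            ((Fin ν → MvPolynomial (Fin n) k) ⧸
              Submodule.span (MvPolynomial (Fin n) k) {g}))) ≃ₗ[MvPolynomial (Fin n) k]
        (Submodule.map Iq.mkQ (Submodule.colon Iq I))) ∧
    ∀ j : ℕ, 2 ≤ j →
      Limits.IsZero
        (((Tor (ModuleCat (MvPolynomial (Fin n) k)) j).obj
            (ModuleCat.of (MvPolynomial (Fin n) k) (MvPolynomial (Fin n) k ⧸ Iq))).obj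
          (ModuleCat.of (MvPolynomial (Fin n) k)
            ((Fin ν → MvPolynomial (Fin n) k) ⧸
              Submodule.span (MvPolynomial (Fin n) k) {g}))) := by
  have hg0 : g ≠ 0 := by
    intro h
    exact hI0 (hI.trans (Ideal.span_eq_bot.mpr (by rintro x ⟨i, rfl⟩; rw [h]; rfl)))
  obtain ⟨i0, hi0⟩ := Function.ne_iff.mp hg0
  have hinj : Function.Injective (TorAux14.Γlin g) := by
    intro a b hab
    have h3 : a * g i0 = b * g i0 := congr_fun hab i0
    exact mul_right_cancel₀ hi0 h3
  exact TorAux14.torComputation g Iq hinj I hI
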